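/- arXiv:0804.1573 — 2 statements merged into one kernel-verified Lean document; each statement's English description precedes it below -/
import Mathlib

section
/- Let n ≥ 2, let V = {s,t,m_1,...,m_n} be the vertex set of K_{2,n}, and let μ be a cut measure on V supported on nontrivial cuts (S ∉ {∅,V}), normalized so that Σ_{S : 1_S(s)≠1_S(t)} μ(S) = 1. Let E be the collection of cuts not monotone with respect to some geodesic s–m_i–t, and suppose μ(E) ≤ ε. Then Σ_{i,j∈[n]} Σ_S μ(S)|1_S(m_i)-1_S(m_j)| ≤ (1+ε)·n²/2. -/
/-- Indicator function of a finite set `S`, with values in `ℝ`. -/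
def ind {X : Type*} [DecidableEq X] (S : Finset X) (v : X) : ℝ := if v ∈ S then 1 else 0

/-- A three-term sequence of indicator values changes value at most once. -/
def Monotone3 (a b c : Prop) : Prop := ¬ ((¬ (a ↔ b)) ∧ (¬ (b ↔ c)))

/-- Vertices of `K_{2,n}`: `Sum.inl false = s`, `Sum.inl true = t`, `Sum.inr i = mᵢ`. -/
abbrev K2nVertex (n : ℕ) := Bool ⊕ Fin n

/-!
Every cut separates at most `n²/2` ordered pairs of middle vertices: if it contains `a` of them,
it separates `2a(n - a) ≤ n²/2` pairs. A cut that does not separate `s` from `t` but is monotone on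
every path `s–mᵢ–t` puts each `mᵢ` on the side of `s` and `t`, so it is trivial; hence `μ` lives on
the separating cuts (mass `1`) and the non-monotone ones (mass `≤ ε`), and has total mass `≤ 1 + ε`.
-/

open Finset

theorem Finset.sum_le_sum_add_sum_of_support_subset {α M : Type*} [Fintype α] [DecidableEq α]
    [AddCommMonoid M] [PartialOrder M] [IsOrderedAddMonoid M] {f : α → M} (hf : ∀ x, 0 ≤ f x)
    (A B : Finset α) (hAB : ∀ x, f x ≠ 0 → x ∈ A ∪ B) :
    ∑ x, f x ≤ ∑ x ∈ A, f x + ∑ x ∈ B, f x := by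
  have hsub : ∑ x ∈ A ∪ B, f x = ∑ x, f x :=
    sum_subset (subset_univ _) fun x _ hx => not_not.1 (mt (hAB x) hx)
  rw [← hsub, ← sum_union_inter]
  exact le_add_of_nonneg_right (sum_nonneg fun x _ => hf x)

section Indicator

variable {X : Type*} [DecidableEq X]

lemma abs_ind_sub_ind (S : Finset X) (a b : X) :
    |ind S a - ind S b| = ind S a + ind S b - 2 * (ind S a * ind S b) := by
  unfold ind; split_ifs <;> norm_num

theorem sum_sum_abs_ind_sub_ind_le {ι : Type*} [Fintype ι] (S : Finset X) (v : ι → X) :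
    ∑ i, ∑ j, |ind S (v i) - ind S (v j)| ≤ (Fintype.card ι : ℝ) ^ 2 / 2 := by
  set a := ∑ i, ind S (v i)
  have hsum : ∑ i, ∑ j, |ind S (v i) - ind S (v j)| = 2 * a * (Fintype.card ι - a) := by
    simp only [abs_ind_sub_ind, sum_sub_distrib, sum_add_distrib, sum_const, card_univ,
      nsmul_eq_mul, ← mul_sum, ← sum_mul]
    ring
  rw [hsum]
  nlinarith [sq_nonneg ((Fintype.card ι : ℝ) - 2 * a)]

end Indicator

theorem K2nVertex.eq_empty_or_eq_univ_of_forall_monotone3 {n : ℕ} (S : Finset (K2nVertex n))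
    (hst : Sum.inl false ∈ S ↔ Sum.inl true ∈ S)
    (hmono : ∀ i, Monotone3 (Sum.inl false ∈ S) (Sum.inr i ∈ S) (Sum.inl true ∈ S)) :
    S = ∅ ∨ S = univ := by
  have hall : ∀ v, v ∈ S ↔ Sum.inl false ∈ S := by
    rintro ((_ | _) | i)
    · rfl
    · exact hst.symm
    · have := hmono i
      unfold Monotone3 at this
      tauto
  by_cases hs : Sum.inl false ∈ S
  · exact Or.inr (eq_univ_iff_forall.2 fun v => (hall v).2 hs)
  · exact Or.inl (eq_empty_iff_forall_notMem.2 fun v hv => hs ((hall v).1 hv))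

open Classical in
theorem stmt16_general (n : ℕ) (ε : ℝ)
    (μ : Finset (K2nVertex n) → ℝ) (hμ : ∀ S, 0 ≤ μ S)
    (hsupp : ∀ S, μ S ≠ 0 → S ≠ ∅ ∧ S ≠ Finset.univ)
    (hnorm : ∑ S ∈ Finset.univ.filter
        (fun S : Finset (K2nVertex n) => ¬ ((Sum.inl false ∈ S) ↔ (Sum.inl true ∈ S))),
      μ S = 1)
    (hbad : ∑ S ∈ Finset.univ.filter (fun S : Finset (K2nVertex n) =>
        ¬ ∀ i : Fin n,
          Monotone3 (Sum.inl false ∈ S) (Sum.inr i ∈ S) (Sum.inl true ∈ S)),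
      μ S ≤ ε) :
    ∑ i : Fin n, ∑ j : Fin n, ∑ S : Finset (K2nVertex n),
        μ S * |ind S (Sum.inr i) - ind S (Sum.inr j)| ≤
      (1 + ε) * (n : ℝ) ^ 2 / 2 := by
  have hmass : ∑ S, μ S ≤ 1 + ε := by
    refine hnorm ▸ (sum_le_sum_add_sum_of_support_subset hμ _ _ fun S hS => ?_).trans
      (add_le_add le_rfl hbad)
    simp only [mem_union, mem_filter, mem_univ, true_and]
    by_contra! h
    obtain ⟨hne, hnu⟩ := hsupp S hS
    rcases K2nVertex.eq_empty_or_eq_univ_of_forall_monotone3 S h.1 h.2 with h | h <;>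
      contradiction
  calc ∑ i : Fin n, ∑ j : Fin n, ∑ S : Finset (K2nVertex n),
        μ S * |ind S (Sum.inr i) - ind S (Sum.inr j)|
      = ∑ S, μ S * ∑ i : Fin n, ∑ j : Fin n, |ind S (Sum.inr i) - ind S (Sum.inr j)| := by
        simp only [mul_sum]
        exact (sum_congr rfl fun i _ => sum_comm).trans sum_comm
    _ ≤ ∑ S, μ S * ((n : ℝ) ^ 2 / 2) := sum_le_sum fun S _ =>
        mul_le_mul_of_nonneg_left (by simpa using sum_sum_abs_ind_sub_ind_le S Sum.inr) (hμ S)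
    _ = (∑ S, μ S) * ((n : ℝ) ^ 2 / 2) := by rw [sum_mul]
    _ ≤ (1 + ε) * ((n : ℝ) ^ 2 / 2) := by gcongr
    _ = (1 + ε) * (n : ℝ) ^ 2 / 2 := by ring

open Classical in
/-- Let `μ` be a cut measure on `V(K_{2,n})` supported on nontrivial cuts
and normalized so that the cuts separating `s` from `t` have total mass `1`.  If the cuts
that fail to be monotone on some geodesic `s–mᵢ–t` have total mass at most `ε`, then
`Σ_{i,j} Σ_S μ(S)|1_S(mᵢ)-1_S(mⱼ)| ≤ (1+ε)·n²/2`. -/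
theorem stmt16 (n : ℕ) (hn : 2 ≤ n) (ε : ℝ) (hε : 0 ≤ ε)
    (μ : Finset (K2nVertex n) → ℝ) (hμ : ∀ S, 0 ≤ μ S)
    (hsupp : ∀ S, μ S ≠ 0 → S ≠ ∅ ∧ S ≠ Finset.univ)
    (hnorm : ∑ S ∈ Finset.univ.filter
        (fun S : Finset (K2nVertex n) => ¬ ((Sum.inl false ∈ S) ↔ (Sum.inl true ∈ S))),
      μ S = 1)
    (hbad : ∑ S ∈ Finset.univ.filter (fun S : Finset (K2nVertex n) =>
        ¬ ∀ i : Fin n,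
          Monotone3 (Sum.inl false ∈ S) (Sum.inr i ∈ S) (Sum.inl true ∈ S)),
      μ S ≤ ε) :
    ∑ i : Fin n, ∑ j : Fin n, ∑ S : Finset (K2nVertex n),
        μ S * |ind S (Sum.inr i) - ind S (Sum.inr j)| ≤
      (1 + ε) * (n : ℝ) ^ 2 / 2 :=
  stmt16_general n ε μ hμ hsupp hnorm hbad
end

section
/- Let (X,d) be a metric space, let P = (x_1,...,x_k) be a 0-efficient sequence in X mapped into L_1 via a cut measure μ on a finite set X (i.e. the associated embedding f satisfies Σ_i ‖f(x_i)-f(x_{i+1})‖_1 = ‖f(x_1)-f(x_k)‖_1). Then every cut S in the support of the separation measure μ^{x_1|x_k} is monotone with respect to P. -/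
/-- The `L₁` distance determined by a cut measure `μ` on a finite set `X`. -/
def cutDist {X : Type*} [Fintype X] [DecidableEq X] (μ : Finset X → ℝ) (u v : X) : ℝ :=
  ∑ S : Finset X, μ S * |ind S u - ind S v|

/-- A sequence `x 0, …, x (k-1)` is monotone with respect to the cut `S` if its
indicator sequence changes value at most once. -/
def MonotoneWrtCut {X : Type*} [DecidableEq X] (S : Finset X) (x : ℕ → X) (k : ℕ) : Prop :=
  ((Finset.range (k - 1)).filter (fun i => ind S (x i) ≠ ind S (x (i + 1)))).card ≤ 1

/-!
Summing the triangle inequality `|1_S(x₀) - 1_S(xₙ)| ≤ Σᵢ |1_S(xᵢ) - 1_S(xᵢ₊₁)|` against the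
nonnegative weights `μ S` gives `‖f(x₀) - f(xₙ)‖₁ ≤ Σᵢ ‖f(xᵢ) - f(xᵢ₊₁)‖₁`. Efficiency says this
is an equality, so it is an equality cut by cut on the support of `μ`. For such a cut the
left side is at most `1`, while the right side counts the changes of the indicator sequence.
-/

open Finset

section Indicator

variable {X : Type*} [DecidableEq X]

theorem abs_ind_sub_ind_s19 (S : Finset X) (u v : X) :
    |ind S u - ind S v| = if ind S u ≠ ind S v then 1 else 0 := by
  unfold ind
  by_cases hu : u ∈ S <;> by_cases hv : v ∈ S <;> simp [hu, hv]

theorem abs_ind_sub_ind_le_one (S : Finset X) (u v : X) : |ind S u - ind S v| ≤ 1 := by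
  rw [abs_ind_sub_ind_s19]
  split_ifs <;> norm_num

theorem abs_ind_sub_ind_le_sum (S : Finset X) (x : ℕ → X) (n : ℕ) :
    |ind S (x 0) - ind S (x n)| ≤ ∑ i ∈ range n, |ind S (x i) - ind S (x (i + 1))| := by
  simpa only [Real.dist_eq] using dist_le_range_sum_dist (fun i => ind S (x i)) n

theorem sum_abs_ind_sub_ind_eq_card (S : Finset X) (x : ℕ → X) (n : ℕ) :
    ∑ i ∈ range n, |ind S (x i) - ind S (x (i + 1))| =
      #{i ∈ range n | ind S (x i) ≠ ind S (x (i + 1))} := by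
  simp only [abs_ind_sub_ind_s19, sum_boole]

end Indicator

section CutMeasure

variable {X : Type*} [Fintype X] [DecidableEq X]

theorem sum_cutDist_eq (μ : Finset X → ℝ) (x : ℕ → X) (n : ℕ) :
    ∑ i ∈ range n, cutDist μ (x i) (x (i + 1)) =
      ∑ S : Finset X, μ S * ∑ i ∈ range n, |ind S (x i) - ind S (x (i + 1))| := by
  simp only [cutDist, mul_sum]
  exact sum_comm

theorem sum_abs_ind_sub_ind_eq_of_efficient {μ : Finset X → ℝ} (hμ : ∀ S, 0 ≤ μ S)
    {x : ℕ → X} {n : ℕ}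
    (heff : ∑ i ∈ range n, cutDist μ (x i) (x (i + 1)) = cutDist μ (x 0) (x n))
    {S : Finset X} (hS : μ S ≠ 0) :
    ∑ i ∈ range n, |ind S (x i) - ind S (x (i + 1))| = |ind S (x 0) - ind S (x n)| := by
  have hle : ∀ T : Finset X, μ T * |ind T (x 0) - ind T (x n)| ≤
      μ T * ∑ i ∈ range n, |ind T (x i) - ind T (x (i + 1))| :=
    fun T => mul_le_mul_of_nonneg_left (abs_ind_sub_ind_le_sum T x n) (hμ T)
  have hsum : ∑ T : Finset X, μ T * |ind T (x 0) - ind T (x n)| =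
      ∑ T : Finset X, μ T * ∑ i ∈ range n, |ind T (x i) - ind T (x (i + 1))| := by
    rw [← sum_cutDist_eq, heff, cutDist]
  have hS_eq := (sum_eq_sum_iff_of_le fun T _ => hle T).mp hsum S (mem_univ S)
  exact (mul_left_cancel₀ hS hS_eq).symm

end CutMeasure

theorem stmt19_general {X : Type*} [Fintype X] [DecidableEq X] (μ : Finset X → ℝ)
    (hμ : ∀ S, 0 ≤ μ S) (x : ℕ → X) (k : ℕ)
    (heff : ∑ i ∈ Finset.range (k - 1), cutDist μ (x i) (x (i + 1)) =
      cutDist μ (x 0) (x (k - 1))) :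
    ∀ S : Finset X, μ S * |ind S (x 0) - ind S (x (k - 1))| ≠ 0 →
      MonotoneWrtCut S x k := by
  intro S hS
  have hcard : (#{i ∈ range (k - 1) | ind S (x i) ≠ ind S (x (i + 1))} : ℝ) ≤ 1 := by
    rw [← sum_abs_ind_sub_ind_eq_card,
      sum_abs_ind_sub_ind_eq_of_efficient hμ heff (left_ne_zero_of_mul hS)]
    exact abs_ind_sub_ind_le_one S _ _
  unfold MonotoneWrtCut
  exact_mod_cast hcard

/-- If the embedding associated to a nonnegative cut measure `μ` on a
finite set `X` is `0`-efficient on a sequence `P = (x₁,…,x_k)` (i.e.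
`Σᵢ ‖f(xᵢ)-f(xᵢ₊₁)‖₁ = ‖f(x₁)-f(x_k)‖₁`), then every cut in the support of the separation
measure `μ^{x₁|x_k}` is monotone with respect to `P`. -/
theorem stmt19 {X : Type*} [Fintype X] [DecidableEq X] (μ : Finset X → ℝ)
    (hμ : ∀ S, 0 ≤ μ S) (x : ℕ → X) (k : ℕ) (hk : 1 ≤ k)
    (heff : ∑ i ∈ Finset.range (k - 1), cutDist μ (x i) (x (i + 1)) =
      cutDist μ (x 0) (x (k - 1))) :
    ∀ S : Finset X, μ S * |ind S (x 0) - ind S (x (k - 1))| ≠ 0 →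
      MonotoneWrtCut S x k :=
  stmt19_general μ hμ x k heff
end
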